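/- arXiv:math/0602634 — 3 statements merged into one kernel-verified Lean document; each statement's English description precedes it below -/
import Mathlib

section
/- If two skew diagrams D and D' satisfy a relation c·s_D = c'·s_{D'} with nonzero integer coefficients c, c', then c = c' and s_D = s_{D'}. In other words, any binomial relation between products of skew Schur functions forces equality of the skew Schur functions of the corresponding disjoint unions with equal coefficients. -/
noncomputable section

/-- Build a multivariate power series in the variables `x_0, x_1, x_2, …` from its
coefficient function. -/
def mps (f : (ℕ →₀ ℕ) → ℤ) : MvPowerSeries ℕ ℤ := f

/-- The skew Schur function of a finite diagram `D ⊆ ℤ × ℤ` (rows indexed by the first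
coordinate, increasing southwards; columns by the second, increasing eastwards): the
coefficient of a monomial `m` is the number of column-strict (semistandard) fillings of `D`
having content `m`, i.e. fillings weakly increasing along rows and strictly increasing
down columns. -/
def skewSchur (D : Finset (ℤ × ℤ)) : MvPowerSeries ℕ ℤ :=
  mps (fun m => (Nat.card {T : {c : ℤ × ℤ // c ∈ D} → ℕ //
    (∀ c c' : {c : ℤ × ℤ // c ∈ D}, c.1.1 = c'.1.1 → c.1.2 ≤ c'.1.2 → T c ≤ T c') ∧
    (∀ c c' : {c : ℤ × ℤ // c ∈ D}, c.1.2 = c'.1.2 → c.1.1 < c'.1.1 → T c < T c') ∧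
    (∀ k : ℕ, m k = (Finset.univ.filter (fun c : {c : ℤ × ℤ // c ∈ D} => T c = k)).card)} : ℤ))

/-- `D` is a skew diagram: a translate of the diagram of a skew shape `λ/μ`. -/
def IsSkewDiagram (D : Finset (ℤ × ℤ)) : Prop :=
  ∃ (lam mu : ℕ → ℕ) (N : ℕ) (a b : ℤ), Antitone lam ∧ Antitone mu ∧
    (∀ i, mu i ≤ lam i) ∧
    D = (Finset.range N).biUnion (fun i =>
      (Finset.Ico (mu i) (lam i)).image (fun j : ℕ => (a + (i : ℤ), b + (j : ℤ))))

namespace SkewAux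

/-- The set of fillings counted by the coefficient of `m` in `skewSchur D`. -/
def Fillings (D : Finset (ℤ × ℤ)) (m : ℕ →₀ ℕ) : Type :=
  {T : {c : ℤ × ℤ // c ∈ D} → ℕ //
    (∀ c c' : {c : ℤ × ℤ // c ∈ D}, c.1.1 = c'.1.1 → c.1.2 ≤ c'.1.2 → T c ≤ T c') ∧
    (∀ c c' : {c : ℤ × ℤ // c ∈ D}, c.1.2 = c'.1.2 → c.1.1 < c'.1.1 → T c < T c') ∧
    (∀ k : ℕ, m k = (Finset.univ.filter (fun c : {c : ℤ × ℤ // c ∈ D} => T c = k)).card)}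

lemma coeff_skewSchur (D : Finset (ℤ × ℤ)) (m : ℕ →₀ ℕ) :
    MvPowerSeries.coeff m (skewSchur D) = (Nat.card (Fillings D m) : ℤ) := rfl

/-- The number of cells of `D` strictly above `c` in the column of `c`. -/
def depth (D : Finset (ℤ × ℤ)) (c : ℤ × ℤ) : ℕ :=
  (D.filter (fun d => d.2 = c.2 ∧ d.1 < c.1)).card

lemma depth_lt {D : Finset (ℤ × ℤ)} {d c : ℤ × ℤ} (hd : d ∈ D) (hcol : d.2 = c.2)
    (hlt : d.1 < c.1) : depth D d < depth D c := by
  apply Finset.card_lt_card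
  have hsub : D.filter (fun e => e.2 = d.2 ∧ e.1 < d.1) ⊆
      D.filter (fun e => e.2 = c.2 ∧ e.1 < c.1) := by
    intro e he
    simp only [Finset.mem_filter] at he ⊢
    exact ⟨he.1, he.2.1.trans hcol, he.2.2.trans hlt⟩
  refine (Finset.ssubset_iff_of_subset hsub).2 ⟨d, Finset.mem_filter.2 ⟨hd, hcol, hlt⟩, ?_⟩
  simp

/-- Northeast closure property of skew diagrams. -/
lemma ne_closed {D : Finset (ℤ × ℤ)} (hD : IsSkewDiagram D) {p q : ℤ × ℤ}
    (hp : p ∈ D) (hq : q ∈ D) (h1 : p.1 ≤ q.1) (h2 : p.2 ≤ q.2) : (p.1, q.2) ∈ D := by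
  obtain ⟨lam, mu, N, a, b, hlam, hmu, hle, rfl⟩ := hD
  simp only [Finset.mem_biUnion, Finset.mem_image, Finset.mem_range, Finset.mem_Ico] at hp hq ⊢
  obtain ⟨i, hi, j, hj, hpe⟩ := hp
  obtain ⟨i', hi', j', hj', hqe⟩ := hq
  have hp1 : p.1 = a + (i : ℤ) := by rw [← hpe]
  have hp2 : p.2 = b + (j : ℤ) := by rw [← hpe]
  have hq1 : q.1 = a + (i' : ℤ) := by rw [← hqe]
  have hq2 : q.2 = b + (j' : ℤ) := by rw [← hqe]
  have hii : i ≤ i' := by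
    rw [hp1, hq1] at h1
    exact_mod_cast add_le_add_iff_left a |>.1 h1
  have hjj : j ≤ j' := by
    rw [hp2, hq2] at h2
    exact_mod_cast add_le_add_iff_left b |>.1 h2
  refine ⟨i, hi, j', ⟨le_trans hj.1 hjj, lt_of_lt_of_le hj'.2 (hlam hii)⟩, ?_⟩
  rw [hp1, hq2]

/-- Any column-strict labelling dominates the depth function. -/
lemma depth_le {D : Finset (ℤ × ℤ)} (T : {c : ℤ × ℤ // c ∈ D} → ℕ)
    (hcol : ∀ c c' : {c : ℤ × ℤ // c ∈ D}, c.1.2 = c'.1.2 → c.1.1 < c'.1.1 → T c < T c') :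
    ∀ c, depth D c.1 ≤ T c := by
  suffices h : ∀ n (c : {c : ℤ × ℤ // c ∈ D}), depth D c.1 ≤ n → depth D c.1 ≤ T c by
    intro c; exact h (depth D c.1) c le_rfl
  intro n
  induction n with
  | zero =>
    intro c h0
    simp [Nat.le_zero.1 h0]
  | succ n ih =>
    intro c hn
    by_cases h0 : depth D c.1 = 0
    · simp [h0]
    · have hne : (D.filter (fun d => d.2 = c.1.2 ∧ d.1 < c.1.1)).Nonempty := by
        rw [← Finset.card_pos]
        exact Nat.pos_of_ne_zero h0
      obtain ⟨d, hdmem, hdmax⟩ := Finset.exists_max_image _ (fun e => e.1) hne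
      simp only [Finset.mem_filter] at hdmem
      obtain ⟨hdD, hdcol, hdlt⟩ := hdmem
      have hdepth_lt : depth D d < depth D c.1 := depth_lt hdD hdcol hdlt
      have hdn : depth D d ≤ n := by omega
      have hTd : depth D d ≤ T ⟨d, hdD⟩ := ih ⟨d, hdD⟩ hdn
      have hTdc : T ⟨d, hdD⟩ < T c := hcol ⟨d, hdD⟩ c hdcol hdlt
      -- depth c ≤ depth d + 1
      have hsub : D.filter (fun e => e.2 = c.1.2 ∧ e.1 < c.1.1) ⊆
          insert d (D.filter (fun e => e.2 = d.2 ∧ e.1 < d.1)) := by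
        intro e he
        simp only [Finset.mem_filter] at he
        rcases eq_or_ne e d with rfl | hed
        · exact Finset.mem_insert_self _ _
        · refine Finset.mem_insert_of_mem (Finset.mem_filter.2 ⟨he.1, he.2.1.trans hdcol.symm, ?_⟩)
          have hle : e.1 ≤ d.1 := hdmax e (Finset.mem_filter.2 he)
          rcases lt_or_eq_of_le hle with h | h
          · exact h
          · exact absurd (Prod.ext h (he.2.1.trans hdcol.symm)) hed
      have hcard : depth D c.1 ≤ depth D d + 1 := by
        calc depth D c.1 ≤ (insert d (D.filter (fun e => e.2 = d.2 ∧ e.1 < d.1))).card :=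
              Finset.card_le_card hsub
          _ ≤ depth D d + 1 := Finset.card_insert_le _ _
      omega

/-- The content of the depth filling, as a finitely supported function. -/
def dcontent (D : Finset (ℤ × ℤ)) : ℕ →₀ ℕ :=
  Finsupp.onFinset (Finset.range (D.card + 1))
    (fun k => (Finset.univ.filter
      (fun c : {c : ℤ × ℤ // c ∈ D} => depth D c.1 = k)).card)
    (by
      intro k hk
      rw [Finset.mem_range]
      have : ∃ c : {c : ℤ × ℤ // c ∈ D}, depth D c.1 = k := by
        by_contra hcon
        push_neg at hcon
        apply hk
        rw [Finset.card_eq_zero, Finset.filter_eq_empty_iff]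
        intro c _
        exact hcon c
      obtain ⟨c, hc⟩ := this
      have : depth D c.1 ≤ D.card := Finset.card_filter_le _ _
      omega)

/-- The depth filling is a valid filling with content `dcontent D`. -/
lemma depth_mem_fillings {D : Finset (ℤ × ℤ)} (hD : IsSkewDiagram D) :
    (∀ c c' : {c : ℤ × ℤ // c ∈ D}, c.1.1 = c'.1.1 → c.1.2 ≤ c'.1.2 →
      depth D c.1 ≤ depth D c'.1) ∧
    (∀ c c' : {c : ℤ × ℤ // c ∈ D}, c.1.2 = c'.1.2 → c.1.1 < c'.1.1 →
      depth D c.1 < depth D c'.1) ∧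
    (∀ k : ℕ, dcontent D k = (Finset.univ.filter
      (fun c : {c : ℤ × ℤ // c ∈ D} => depth D c.1 = k)).card) := by
  refine ⟨?_, ?_, ?_⟩
  · -- rows weakly increase
    intro c c' hrow hcle
    apply Finset.card_le_card_of_injOn (fun e => (e.1, c'.1.2))
    · intro e he
      simp only [Finset.mem_coe, Finset.mem_filter] at he
      obtain ⟨heD, hecol, helt⟩ := he
      have hmem : (e.1, c'.1.2) ∈ D :=
        ne_closed hD heD c'.2 (le_of_lt (by rw [hrow] at helt; exact helt))
          (by rw [hecol]; exact hcle)
      refine Finset.mem_filter.2 ⟨hmem, rfl, ?_⟩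
      show e.1 < c'.1.1
      rw [← hrow]; exact helt
    · intro e he e' he' heq
      simp only [Finset.mem_coe, Finset.mem_filter] at he he'
      have h1 := congrArg Prod.fst heq
      simp only at h1
      have h2 : e.2 = e'.2 := he.2.1.trans he'.2.1.symm
      exact Prod.ext h1 h2
  · intro c c' hcol hlt
    exact depth_lt c.2 hcol hlt
  · intro k
    rfl

/-- The coefficient of `dcontent D` in `skewSchur D` is exactly `1`. -/
lemma card_fillings_dcontent {D : Finset (ℤ × ℤ)} (hD : IsSkewDiagram D) :
    Nat.card (Fillings D (dcontent D)) = 1 := by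
  -- every valid filling with content `dcontent D` equals the depth filling
  have key : ∀ T : Fillings D (dcontent D), ∀ c, T.1 c = depth D c.1 := by
    rintro ⟨T, hrow, hcolT, hcont⟩
    obtain ⟨-, -, hdcont⟩ := depth_mem_fillings hD
    have hlb : ∀ c, depth D c.1 ≤ T c := depth_le T hcolT
    -- bound on T values
    have hbound : ∀ c, T c ∈ Finset.range (D.card + 1) := by
      intro c
      have hmem : c ∈ Finset.univ.filter
          (fun c' : {c : ℤ × ℤ // c ∈ D} => T c' = T c) :=
        Finset.mem_filter.2 ⟨Finset.mem_univ c, rfl⟩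
      have hpos : dcontent D (T c) ≠ 0 := by
        rw [hcont (T c)]
        exact Finset.card_ne_zero_of_mem hmem
      have := Finsupp.support_onFinset_subset (Finsupp.mem_support_iff.2 hpos)
      exact this
    have hbound' : ∀ c : {c : ℤ × ℤ // c ∈ D}, depth D c.1 ∈ Finset.range (D.card + 1) := by
      intro c
      rw [Finset.mem_range]
      have : depth D c.1 ≤ D.card := Finset.card_filter_le _ _
      omega
    -- sums agree
    have hsum1 : ∑ c : {c : ℤ × ℤ // c ∈ D}, T c
        = ∑ k ∈ Finset.range (D.card + 1), k * dcontent D k := by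
      rw [← Finset.sum_fiberwise_of_maps_to (fun c _ => hbound c) T]
      apply Finset.sum_congr rfl
      intro k _
      rw [hcont k]
      calc ∑ c ∈ Finset.univ.filter (fun c : {c : ℤ × ℤ // c ∈ D} => T c = k), T c
          = ∑ _c ∈ Finset.univ.filter (fun c : {c : ℤ × ℤ // c ∈ D} => T c = k), k :=
            Finset.sum_congr rfl (fun c hcm => (Finset.mem_filter.1 hcm).2)
        _ = _ := by rw [Finset.sum_const, smul_eq_mul, mul_comm]
    have hsum2 : ∑ c : {c : ℤ × ℤ // c ∈ D}, depth D c.1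
        = ∑ k ∈ Finset.range (D.card + 1), k * dcontent D k := by
      rw [← Finset.sum_fiberwise_of_maps_to (fun c _ => hbound' c)
        (fun c : {c : ℤ × ℤ // c ∈ D} => depth D c.1)]
      apply Finset.sum_congr rfl
      intro k _
      rw [hdcont k]
      calc ∑ c ∈ Finset.univ.filter
            (fun c : {c : ℤ × ℤ // c ∈ D} => depth D c.1 = k), depth D c.1
          = ∑ _c ∈ Finset.univ.filter
            (fun c : {c : ℤ × ℤ // c ∈ D} => depth D c.1 = k), k :=
            Finset.sum_congr rfl (fun c hcm => (Finset.mem_filter.1 hcm).2)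
        _ = _ := by rw [Finset.sum_const, smul_eq_mul, mul_comm]
    have heq := (Finset.sum_eq_sum_iff_of_le
      (f := fun c : {c : ℤ × ℤ // c ∈ D} => depth D c.1) (g := T)
      (fun c _ => hlb c)).1 (hsum2.trans hsum1.symm)
    intro c
    exact (heq c (Finset.mem_univ c)).symm
  rw [Nat.card_eq_one_iff_unique]
  constructor
  · exact ⟨fun T T' => Subtype.ext (funext (fun c => (key T c).trans (key T' c).symm))⟩
  · obtain ⟨h1, h2, h3⟩ := depth_mem_fillings hD
    exact ⟨⟨fun c => depth D c.1, h1, h2, h3⟩⟩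

end SkewAux

open SkewAux in
/-- Any binomial relation `c · s_D = c' · s_{D'}` between skew Schur functions with nonzero
integer coefficients forces `c = c'` and `s_D = s_{D'}`. -/
theorem binomial_syzygy_forces_equality (D D' : Finset (ℤ × ℤ))
    (hD : IsSkewDiagram D) (hD' : IsSkewDiagram D')
    (c c' : ℤ) (hc : c ≠ 0) (hc' : c' ≠ 0)
    (h : c • skewSchur D = c' • skewSchur D') :
    c = c' ∧ skewSchur D = skewSchur D' := by
  have key : ∀ m : ℕ →₀ ℕ, c * (Nat.card (Fillings D m) : ℤ)
      = c' * (Nat.card (Fillings D' m) : ℤ) := by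
    intro m
    have := congrArg (MvPowerSeries.coeff m) h
    rwa [map_smul, map_smul, smul_eq_mul, smul_eq_mul,
      coeff_skewSchur, coeff_skewSchur] at this
  have h1 := key (dcontent D)
  rw [card_fillings_dcontent hD, Nat.cast_one, mul_one] at h1
  -- h1 : c = c' * v
  have h2 := key (dcontent D')
  rw [card_fillings_dcontent hD', Nat.cast_one, mul_one] at h2
  -- h2 : c * u = c'
  set u : ℕ := Nat.card (Fillings D (dcontent D')) with hu
  set v : ℕ := Nat.card (Fillings D' (dcontent D)) with hv
  have hcc : c * ((u : ℤ) * (v : ℤ)) = c * 1 := by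
    rw [mul_one, ← mul_assoc, h2, ← h1]
  have huv : (u : ℤ) * (v : ℤ) = 1 := mul_left_cancel₀ hc hcc
  have huv' : u * v = 1 := by exact_mod_cast huv
  have hv1 : v = 1 := Nat.eq_one_of_mul_eq_one_left huv'
  have hceq : c = c' := by rw [h1, hv1, Nat.cast_one, mul_one]
  refine ⟨hceq, ?_⟩
  apply MvPowerSeries.ext
  intro m
  rw [coeff_skewSchur, coeff_skewSchur]
  have := key m
  rw [hceq] at this
  exact mul_left_cancel₀ hc' this
end
end

section
/- Let D be a skew diagram. For each k ≥ 1 let ρ^(k) be the k-row overlap partition and γ^(k) the k-column overlap partition, and let a_{k,ℓ} be the number of k × ℓ rectangular subdiagrams contained in D. Then a_{k,ℓ} = Σ_{ℓ' ≥ ℓ} (ρ^(k))ᵗ_{ℓ'} = Σ_{k' ≥ k} (γ^(ℓ))ᵗ_{k'}; consequently the data (ρ^(k))_{k≥1}, (γ^(k))_{k≥1}, (a_{k,ℓ})_{k,ℓ≥1} pairwise determine one another. -/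
noncomputable section

/-- The `i`-th entry of the `k`-row overlap composition of `D`: the number of columns
occupied in common by rows `i, i+1, …, i+k-1` of `D`. -/
def rowOverlap (D : Finset (ℤ × ℤ)) (k : ℕ) (i : ℤ) : ℕ :=
  ((D.image Prod.snd).filter (fun j => ∀ t : ℕ, t < k → ((i + (t : ℤ), j) ∈ D))).card

/-- The `j`-th entry of the `l`-column overlap composition of `D`. -/
def colOverlap (D : Finset (ℤ × ℤ)) (l : ℕ) (j : ℤ) : ℕ :=
  ((D.image Prod.fst).filter (fun i => ∀ s : ℕ, s < l → ((i, j + (s : ℤ)) ∈ D))).card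

/-- `a_{k,l}`: the number of `k × l` rectangular subdiagrams contained in `D`. -/
def rectCount (D : Finset (ℤ × ℤ)) (k l : ℕ) : ℕ :=
  (D.filter (fun c => ∀ t : ℕ, t < k → ∀ s : ℕ, s < l → ((c.1 + (t : ℤ), c.2 + (s : ℤ)) ∈ D))).card

/-- `(ρ^{(k)})ᵗ_L`: the number of parts of the `k`-row overlap partition that are `≥ L`. -/
def conjRow (D : Finset (ℤ × ℤ)) (k L : ℕ) : ℕ :=
  ((D.image Prod.fst).filter (fun i => L ≤ rowOverlap D k i)).card

/-- `(γ^{(l)})ᵗ_K`: the number of parts of the `l`-column overlap partition that are `≥ K`. -/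
def conjCol (D : Finset (ℤ × ℤ)) (l K : ℕ) : ℕ :=
  ((D.image Prod.snd).filter (fun j => K ≤ colOverlap D l j)).card

def RowConvex (D : Finset (ℤ × ℤ)) : Prop :=
  ∀ i j1 j2 j : ℤ, (i, j1) ∈ D → (i, j2) ∈ D → j1 ≤ j → j ≤ j2 → (i, j) ∈ D

def ColConvex (D : Finset (ℤ × ℤ)) : Prop :=
  ∀ j i1 i2 i : ℤ, (i1, j) ∈ D → (i2, j) ∈ D → i1 ≤ i → i ≤ i2 → (i, j) ∈ D

lemma count_consec (A : Finset ℤ)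
    (hA : ∀ ⦃x y z : ℤ⦄, x ∈ A → z ∈ A → x ≤ y → y ≤ z → y ∈ A)
    {l : ℕ} (hl : 1 ≤ l) :
    (A.filter (fun j => ∀ s : ℕ, s < l → j + (s : ℤ) ∈ A)).card = A.card - (l - 1) := by
  rcases A.eq_empty_or_nonempty with h | hne
  · simp [h]
  · set a := A.min' hne with ha
    set b := A.max' hne with hb
    have hab : a ≤ b := A.min'_le _ (A.max'_mem hne)
    have hIcc : A = Finset.Icc a b := by
      ext x
      simp only [Finset.mem_Icc]
      constructor
      · intro hx; exact ⟨A.min'_le x hx, A.le_max' x hx⟩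
      · rintro ⟨h1, h2⟩; exact hA (A.min'_mem hne) (A.max'_mem hne) h1 h2
    have hfil : A.filter (fun j => ∀ s : ℕ, s < l → j + (s : ℤ) ∈ A)
        = Finset.Icc a (b - (l - 1 : ℕ)) := by
      ext j
      simp only [Finset.mem_filter, hIcc, Finset.mem_Icc]
      constructor
      · rintro ⟨⟨hj1, _⟩, hs⟩
        have h := hs (l - 1) (by omega)
        omega
      · rintro ⟨h1, h2⟩
        refine ⟨⟨h1, by omega⟩, fun s hs => ⟨by omega, by omega⟩⟩
    rw [hfil, hIcc, Int.card_Icc, Int.card_Icc]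
    omega

lemma mem_swapImage (D : Finset (ℤ × ℤ)) (p : ℤ × ℤ) :
    p ∈ D.image Prod.swap ↔ p.swap ∈ D := by
  simp only [Finset.mem_image]
  constructor
  · rintro ⟨a, ha, rfl⟩; simpa using ha
  · intro h; exact ⟨p.swap, h, Prod.swap_swap p⟩

lemma rectCount_swap (D : Finset (ℤ × ℤ)) (k l : ℕ) :
    rectCount (D.image Prod.swap) l k = rectCount D k l := by
  classical
  rw [rectCount, rectCount]
  rw [show (D.image Prod.swap).filter (fun c => ∀ t : ℕ, t < l → ∀ s : ℕ, s < k →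
      ((c.1 + (t : ℤ), c.2 + (s : ℤ)) ∈ D.image Prod.swap))
      = (D.filter (fun c => ∀ t : ℕ, t < k → ∀ s : ℕ, s < l →
      ((c.1 + (t : ℤ), c.2 + (s : ℤ)) ∈ D))).image Prod.swap from ?_]
  · exact Finset.card_image_of_injective _ Prod.swap_injective
  · ext c
    rw [mem_swapImage, Finset.mem_filter, Finset.mem_filter]
    simp only [mem_swapImage, Prod.fst_swap, Prod.snd_swap, Prod.swap_prod_mk]
    constructor
    · rintro ⟨h1, h2⟩; exact ⟨h1, fun t ht s hs => h2 s hs t ht⟩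
    · rintro ⟨h1, h2⟩; exact ⟨h1, fun t ht s hs => h2 s hs t ht⟩

lemma rowOverlap_swap (D : Finset (ℤ × ℤ)) (l : ℕ) (i : ℤ) :
    rowOverlap (D.image Prod.swap) l i = colOverlap D l i := by
  classical
  rw [rowOverlap, colOverlap]
  have h1 : (D.image Prod.swap).image Prod.snd = D.image Prod.fst := by
    rw [Finset.image_image]; rfl
  rw [h1]
  congr 1
  apply Finset.filter_congr
  intro x _
  simp only [mem_swapImage, Prod.swap_prod_mk]

lemma conjRow_swap (D : Finset (ℤ × ℤ)) (l K : ℕ) :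
    conjRow (D.image Prod.swap) l K = conjCol D l K := by
  classical
  rw [conjRow, conjCol]
  have h1 : (D.image Prod.swap).image Prod.fst = D.image Prod.snd := by
    rw [Finset.image_image]; rfl
  rw [h1]
  congr 1
  apply Finset.filter_congr
  intro x _
  rw [rowOverlap_swap]

lemma rowConvex_of_skew {D : Finset (ℤ × ℤ)} (hD : IsSkewDiagram D) : RowConvex D := by
  obtain ⟨lam, mu, N, a, b, hlam, hmu, hle, rfl⟩ := hD
  intro i j1 j2 j h1 h2 hj1 hj2
  simp only [Finset.mem_biUnion, Finset.mem_image, Finset.mem_Ico, Finset.mem_range,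
    Prod.mk.injEq] at h1 h2 ⊢
  obtain ⟨p, hp, x, ⟨hx1, hx2⟩, hpx1, hpx2⟩ := h1
  obtain ⟨q, hq, y, ⟨hy1, hy2⟩, hqy1, hqy2⟩ := h2
  have hpq : p = q := by omega
  subst hpq
  exact ⟨p, hp, (j - b).toNat, ⟨by omega, by omega⟩, by omega, by omega⟩

lemma colConvex_of_skew {D : Finset (ℤ × ℤ)} (hD : IsSkewDiagram D) : ColConvex D := by
  obtain ⟨lam, mu, N, a, b, hlam, hmu, hle, rfl⟩ := hD
  intro j i1 i2 i h1 h2 hi1 hi2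
  simp only [Finset.mem_biUnion, Finset.mem_image, Finset.mem_Ico, Finset.mem_range,
    Prod.mk.injEq] at h1 h2 ⊢
  obtain ⟨p, hp, x, ⟨hx1, hx2⟩, hpx1, hpx2⟩ := h1
  obtain ⟨q, hq, y, ⟨hy1, hy2⟩, hqy1, hqy2⟩ := h2
  have hxy : x = y := by omega
  subst hxy
  refine ⟨(i - a).toNat, by omega, x, ⟨?_, ?_⟩, by omega, by omega⟩
  · exact le_trans (hmu (show p ≤ (i - a).toNat by omega)) hx1
  · exact lt_of_lt_of_le hy2 (hlam (show (i - a).toNat ≤ q by omega))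

lemma rowConvex_swap {D : Finset (ℤ × ℤ)} (h : ColConvex D) :
    RowConvex (D.image Prod.swap) := by
  intro i j1 j2 j h1 h2 hj1 hj2
  rw [mem_swapImage] at h1 h2 ⊢
  exact h i j1 j2 j h1 h2 hj1 hj2

lemma main_row (D : Finset (ℤ × ℤ)) (hconv : RowConvex D)
    (k l : ℕ) (hk : 1 ≤ k) (hl : 1 ≤ l) :
    rectCount D k l = ∑' L : ℕ, if l ≤ L then conjRow D k L else 0 := by
  classical
  set J := D.image Prod.snd with hJ
  set I := D.image Prod.fst with hI
  set M := J.card with hM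
  have hbound : ∀ i : ℤ, rowOverlap D k i ≤ M := fun i => Finset.card_filter_le _ _
  -- RHS as finite sum
  have hzero : ∀ L ∉ Finset.range (M + 1), (if l ≤ L then conjRow D k L else 0) = 0 := by
    intro L hL
    rw [Finset.mem_range, not_lt] at hL
    have h0 : conjRow D k L = 0 := by
      apply Finset.card_eq_zero.mpr
      rw [Finset.filter_eq_empty_iff]
      intro i _
      have := hbound i
      omega
    simp [h0]
  rw [tsum_eq_sum hzero]
  have hsplit : ∀ L : ℕ, (if l ≤ L then conjRow D k L else 0)
      = ∑ i ∈ I, (if l ≤ L ∧ L ≤ rowOverlap D k i then 1 else 0) := by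
    intro L
    by_cases h : l ≤ L
    · simp only [h, if_true, true_and]
      rw [conjRow, Finset.card_filter]
    · simp [h]
  simp_rw [hsplit]
  rw [Finset.sum_comm]
  have hrow : ∀ i ∈ I,
      (∑ L ∈ Finset.range (M + 1), if l ≤ L ∧ L ≤ rowOverlap D k i then 1 else 0)
      = rowOverlap D k i - (l - 1) := by
    intro i _
    rw [← Finset.card_filter]
    have : (Finset.range (M + 1)).filter (fun L => l ≤ L ∧ L ≤ rowOverlap D k i)
        = Finset.Icc l (rowOverlap D k i) := by
      ext L
      have := hbound i
      simp only [Finset.mem_filter, Finset.mem_range, Finset.mem_Icc]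
      omega
    rw [this, Nat.card_Icc]
    omega
  rw [Finset.sum_congr rfl hrow]
  -- LHS
  have hfib : ∀ c ∈ D.filter (fun c => ∀ t : ℕ, t < k → ∀ s : ℕ, s < l →
      ((c.1 + (t : ℤ), c.2 + (s : ℤ)) ∈ D)), c.1 ∈ I :=
    fun c hc => Finset.mem_image_of_mem _ (Finset.mem_filter.mp hc).1
  rw [rectCount, Finset.card_eq_sum_card_fiberwise hfib]
  refine Finset.sum_congr rfl fun i _ => ?_
  set B : Finset ℤ := J.filter
      (fun j => ∀ t : ℕ, t < k → ∀ s : ℕ, s < l → ((i + (t : ℤ), j + (s : ℤ)) ∈ D)) with hB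
  have himg : (D.filter (fun c => ∀ t : ℕ, t < k → ∀ s : ℕ, s < l →
      ((c.1 + (t : ℤ), c.2 + (s : ℤ)) ∈ D))).filter (fun c => c.1 = i)
      = B.image (fun j => (i, j)) := by
    ext c
    simp only [Finset.mem_filter, Finset.mem_image, hB, hJ]
    constructor
    · rintro ⟨⟨hcD, hrect⟩, hci⟩
      refine ⟨c.2, ⟨⟨c, hcD, rfl⟩, by rw [← hci]; exact hrect⟩, ?_⟩
      rw [← hci]
    · rintro ⟨j, ⟨-, hrect⟩, rfl⟩
      have hD0 : (i, j) ∈ D := by simpa using hrect 0 hk 0 hl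
      exact ⟨⟨hD0, hrect⟩, rfl⟩
  rw [himg, Finset.card_image_of_injective _ (fun j1 j2 h => by simpa using h)]
  -- now count B via count_consec
  set A : Finset ℤ := J.filter (fun j => ∀ t : ℕ, t < k → ((i + (t : ℤ), j) ∈ D)) with hA
  have hAconv : ∀ ⦃x y z : ℤ⦄, x ∈ A → z ∈ A → x ≤ y → y ≤ z → y ∈ A := by
    intro x y z hx hz hxy hyz
    rw [hA, Finset.mem_filter] at hx hz ⊢
    have hrows : ∀ t : ℕ, t < k → ((i + (t : ℤ), y) ∈ D) :=
      fun t ht => hconv _ _ _ _ (hx.2 t ht) (hz.2 t ht) hxy hyz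
    have : (i, y) ∈ D := by simpa using hrows 0 hk
    exact ⟨Finset.mem_image_of_mem _ this, hrows⟩
  have hBA : B = A.filter (fun j => ∀ s : ℕ, s < l → j + (s : ℤ) ∈ A) := by
    ext j
    simp only [hB, hA, Finset.mem_filter]
    constructor
    · rintro ⟨hjJ, hrect⟩
      refine ⟨⟨hjJ, fun t ht => by simpa using hrect t ht 0 hl⟩, fun s hs => ?_⟩
      have : (i, j + (s : ℤ)) ∈ D := by simpa using hrect 0 hk s hs
      exact ⟨Finset.mem_image_of_mem Prod.snd this, fun t ht => hrect t ht s hs⟩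
    · rintro ⟨⟨hjJ, -⟩, hs⟩
      exact ⟨hjJ, fun t ht s hs' => (hs s hs').2 t ht⟩
  rw [hBA, count_consec A hAconv hl]
  rfl

/-- For a skew diagram `D` and `k, l ≥ 1`, the number `a_{k,l}` of `k × l` rectangles
contained in `D` satisfies
`a_{k,l} = ∑_{l' ≥ l} (ρ^{(k)})ᵗ_{l'} = ∑_{k' ≥ k} (γ^{(l)})ᵗ_{k'}`;
consequently the row overlap partitions, column overlap partitions and rectangle counts
determine one another. -/
theorem overlap_rectangle_counts (D : Finset (ℤ × ℤ)) (hD : IsSkewDiagram D)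
    (k l : ℕ) (hk : 1 ≤ k) (hl : 1 ≤ l) :
    (rectCount D k l = ∑' L : ℕ, if l ≤ L then conjRow D k L else 0) ∧
    (rectCount D k l = ∑' K : ℕ, if k ≤ K then conjCol D l K else 0) := by
  constructor
  · exact main_row D (rowConvex_of_skew hD) k l hk hl
  · have h := main_row (D.image Prod.swap) (rowConvex_swap (colConvex_of_skew hD)) l k hl hk
    rw [rectCount_swap] at h
    rw [h]
    exact tsum_congr fun K => by rw [conjRow_swap]
end
end

section
/- Let D be a skew diagram, and let D̂ be the skew diagram obtained from D by removing the top cell of every column. Then the k-row overlap compositions satisfy r^(k)(D̂) = r^(k+1)(D) for all k ≥ 1 (after deleting trailing/leading zero entries consistently), i.e. D̂ is the unique skew diagram whose k-row overlaps agree with the (k+1)-row overlaps of D. -/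
noncomputable section

/-- `D̂`: the diagram obtained from `D` by removing the top cell of every column. -/
def hatD (D : Finset (ℤ × ℤ)) : Finset (ℤ × ℤ) := D.filter (fun c => (c.1 - 1, c.2) ∈ D)

/-- Removing the top cell of every column of a skew diagram `D` yields a skew diagram `D̂`
whose `k`-row overlap compositions are the `(k+1)`-row overlap compositions of `D`
(rows of `D̂` being aligned with the rows of `D` shifted down by one). -/
theorem hat_overlap (D : Finset (ℤ × ℤ)) (hD : IsSkewDiagram D) :
    IsSkewDiagram (hatD D) ∧
    ∀ k : ℕ, 1 ≤ k → ∀ i : ℤ, rowOverlap (hatD D) k (i + 1) = rowOverlap D (k + 1) i := by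
  constructor
  · obtain ⟨lam, mu, N, a, b, hlam, hmu, hle, hDeq⟩ := hD
    refine ⟨fun i => max (lam (i+1)) (mu i), mu, N - 1, a + 1, b, ?_, hmu,
      fun i => le_max_right _ _, ?_⟩
    · intro i j hij
      exact max_le_max (hlam (by omega)) (hmu hij)
    · ext c
      simp only [hatD, Finset.mem_filter, hDeq, Finset.mem_biUnion, Finset.mem_range,
        Finset.mem_image, Finset.mem_Ico]
      constructor
      · rintro ⟨⟨i, hiN, j, ⟨hj1, hj2⟩, rfl⟩, i', hi'N, j', ⟨hj1', hj2'⟩, hc'⟩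
        simp only [Prod.mk.injEq] at hc'
        have hi' : (i' : ℤ) = (i : ℤ) - 1 := by linarith [hc'.1]
        have hj' : j' = j := by
          have := hc'.2; omega
        have hi1 : 1 ≤ i := by omega
        have hieq : i' = i - 1 := by omega
        subst hieq hj'
        refine ⟨i - 1, by omega, j', ⟨hj1', ?_⟩, ?_⟩
        · have : i - 1 + 1 = i := by omega
          rw [this]
          exact lt_max_iff.mpr (Or.inl hj2)
        · have : a + 1 + ((i - 1 : ℕ) : ℤ) = a + (i : ℤ) := by
            push_cast [hi1]; ring
          rw [this]
      · rintro ⟨i, hiN, j, ⟨hj1, hj2⟩, rfl⟩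
        have hj2' : j < lam (i + 1) := by
          rcases lt_max_iff.mp hj2 with h | h
          · exact h
          · omega
        have hcast : a + 1 + (i : ℤ) = a + ((i + 1 : ℕ) : ℤ) := by push_cast; ring
        constructor
        · exact ⟨i + 1, by omega, j, ⟨le_trans (hmu (by omega)) hj1, hj2'⟩,
            by rw [hcast]⟩
        · refine ⟨i, by omega, j, ⟨hj1, lt_of_lt_of_le hj2' (hlam (by omega))⟩, ?_⟩
          simp only [Prod.mk.injEq]
          exact ⟨by ring, trivial⟩
  · intro k hk i
    have key : ∀ j : ℤ, (∀ t : ℕ, t < k → ((i + 1 + (t : ℤ), j) ∈ hatD D)) ↔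
        (∀ t : ℕ, t < k + 1 → ((i + (t : ℤ), j) ∈ D)) := by
      intro j
      constructor
      · intro h t ht
        rcases Nat.lt_or_ge t k with h1 | h1
        · have := (Finset.mem_filter.mp (h t h1)).2
          have e : i + 1 + (t : ℤ) - 1 = i + t := by ring
          rwa [e] at this
        · have ht' : t = k := by omega
          have := (Finset.mem_filter.mp (h (k - 1) (by omega))).1
          have e : i + 1 + ((k - 1 : ℕ) : ℤ) = i + (t : ℤ) := by
            subst ht'; push_cast [hk]; ring
          rwa [e] at this
      · intro h t ht
        refine Finset.mem_filter.mpr ⟨?_, ?_⟩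
        · have := h (t + 1) (by omega)
          have e : i + ((t + 1 : ℕ) : ℤ) = i + 1 + t := by push_cast; ring
          rwa [e] at this
        · have := h t (by omega)
          have e : (i + 1 + (t : ℤ) - 1, j) = (i + (t : ℤ), j) := by
            simp only [Prod.mk.injEq, and_true]; ring
          rwa [e]
    unfold rowOverlap
    apply congrArg Finset.card
    ext j
    simp only [Finset.mem_filter]
    constructor
    · rintro ⟨hmem, hP⟩
      have hP' := (key j).mp hP
      refine ⟨?_, hP'⟩
      obtain ⟨c, hc, rfl⟩ := Finset.mem_image.mp hmem
      exact Finset.mem_image.mpr ⟨c, Finset.mem_of_mem_filter c hc, rfl⟩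
    · rintro ⟨hmem, hP⟩
      have hP' := (key j).mpr hP
      refine ⟨?_, hP'⟩
      have h0 := hP' 0 (by omega)
      simp only [Nat.cast_zero, add_zero] at h0
      exact Finset.mem_image.mpr ⟨(i + 1, j), h0, rfl⟩
end
end
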